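/- arXiv:1409.3741 — 2 statements merged into one kernel-verified Lean document; each statement's English description precedes it below -/
import Mathlib

section
/- Every δ-stationary point x* of the regret function f in a normalized polymatrix game is a (0.5 + δ)-approximate Nash equilibrium, i.e., f(x*) ≤ 0.5 + δ. -/
/-! Test the stationarity condition at `x*` against the profile `x'` of pure best responses.
For a player `i` of maximum regret `f = f(x*)`, normalization bounds the first two terms of
`Df_i^δ(x*, x')` by `1` and `0`, while the last two sum to `-f`; hence
`-δ ≤ Df^δ(x*, x') ≤ 1 - 2f`, i.e. `f ≤ (1 + δ) / 2`. -/

open Finset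
open scoped Classical

noncomputable section

/-- maximum of `v` over a finset `S` (junk value `0` if `S` is empty). -/
noncomputable def finMaxOn {α : Type*} (S : Finset α) (v : α → ℝ) : ℝ :=
  if h : S.Nonempty then S.sup' h v else 0

/-- minimum of `v` over a finset `S` (junk value `0` if `S` is empty). -/
noncomputable def finMinOn {α : Type*} (S : Finset α) (v : α → ℝ) : ℝ :=
  if h : S.Nonempty then S.inf' h v else 0

section Polymatrix

variable {n : ℕ} (m : Fin n → ℕ) (N : Fin n → Finset (Fin n))
  (A : ∀ i j : Fin n, Matrix (Fin (m i)) (Fin (m j)) ℝ)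

/-- vector of pure-strategy payoffs of player `i` against profile `x`:
`u_i^s(x) = Σ_{j ∈ N(i)} A_ij x_j`. -/
def usVec (i : Fin n) (x : ∀ j, Fin (m j) → ℝ) : Fin (m i) → ℝ :=
  fun k => ∑ j ∈ N i, ∑ q, A i j k q * x j q

/-- payoff to player `i` from playing the (possibly formal) strategy `y`
against profile `x`: `u_i(y, x) = yᵀ u_i^s(x)`. -/
def payTo (i : Fin n) (y : Fin (m i) → ℝ) (x : ∀ j, Fin (m j) → ℝ) : ℝ :=
  ∑ k, y k * usVec m N A i x k

/-- payoff of player `i` under profile `x`. -/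
def payoff (i : Fin n) (x : ∀ j, Fin (m j) → ℝ) : ℝ := payTo m N A i (x i) x

/-- best-response payoff of player `i` against `x`. -/
def brp (i : Fin n) (x : ∀ j, Fin (m j) → ℝ) : ℝ := finMaxOn univ (usVec m N A i x)

/-- pure best responses of player `i` against `x`. -/
def brSet (i : Fin n) (x : ∀ j, Fin (m j) → ℝ) : Finset (Fin (m i)) :=
  univ.filter fun k => ∀ l, usVec m N A i x l ≤ usVec m N A i x k

/-- `δ`-best responses of player `i` against `x`. -/
def brdSet (δ : ℝ) (i : Fin n) (x : ∀ j, Fin (m j) → ℝ) : Finset (Fin (m i)) :=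
  univ.filter fun k => brp m N A i x - δ ≤ usVec m N A i x k

/-- regret of player `i` under `x`: `f_i(x)`. -/
def regret (i : Fin n) (x : ∀ j, Fin (m j) → ℝ) : ℝ :=
  brp m N A i x - payoff m N A i x

/-- maximum regret `f(x) = max_i f_i(x)`. -/
def maxRegret (x : ∀ j, Fin (m j) → ℝ) : ℝ := finMaxOn univ fun i => regret m N A i x

/-- set of players with maximum regret `K(x)`. -/
def Kset (x : ∀ j, Fin (m j) → ℝ) : Finset (Fin n) :=
  univ.filter fun i => regret m N A i x = maxRegret m N A x

/-- `Df_i^δ(x, x')`. -/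
def Dfd (δ : ℝ) (i : Fin n) (x x' : ∀ j, Fin (m j) → ℝ) : ℝ :=
  finMaxOn (brdSet m N A δ i x) (usVec m N A i x')
    - payTo m N A i (x i) x' - payTo m N A i (x' i) x + payTo m N A i (x i) x

/-- `Df^δ(x, x') = max_{i ∈ K(x)} Df_i^δ(x, x') - f(x)`. -/
def DfdAll (δ : ℝ) (x x' : ∀ j, Fin (m j) → ℝ) : ℝ :=
  finMaxOn (Kset m N A x) (fun i => Dfd m N A δ i x x') - maxRegret m N A x

/-- `Df_i(x, x')` (with exact best responses). -/
def Dfbr (i : Fin n) (x x' : ∀ j, Fin (m j) → ℝ) : ℝ :=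
  finMaxOn (brSet m N A i x) (usVec m N A i x')
    - payTo m N A i (x i) x' - payTo m N A i (x' i) x + payTo m N A i (x i) x

/-- the profile `(1-ε)x + εx'`. -/
def mix (x x' : ∀ j, Fin (m j) → ℝ) (ε : ℝ) : ∀ j, Fin (m j) → ℝ :=
  fun j => (1 - ε) • x j + ε • x' j

/-- `Λ_i^δ(x, x', ε)`; if the complement of the `δ`-best-response set is empty
the inner maximum is `-∞`, i.e. `Λ_i^δ = 0`. -/
def Lamd (δ : ℝ) (i : Fin n) (x x' : ∀ j, Fin (m j) → ℝ) (ε : ℝ) : ℝ :=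
  if _h : ((brdSet m N A δ i x)ᶜ).Nonempty then
    max 0 (finMaxOn (brdSet m N A δ i x)ᶜ (usVec m N A i (mix m x x' ε))
         - finMaxOn (brdSet m N A δ i x) (usVec m N A i (mix m x x' ε)))
  else 0

/-- `Λ_i(x, x', ε)` (with exact best responses). -/
def LamBr (i : Fin n) (x x' : ∀ j, Fin (m j) → ℝ) (ε : ℝ) : ℝ :=
  if _h : ((brSet m N A i x)ᶜ).Nonempty then
    max 0 (finMaxOn (brSet m N A i x)ᶜ (usVec m N A i (mix m x x' ε))
         - finMaxOn (brSet m N A i x) (usVec m N A i (mix m x x' ε)))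
  else 0

/-- `x` is a mixed strategy profile. -/
def isProfile (x : ∀ j, Fin (m j) → ℝ) : Prop :=
  ∀ j, x j ∈ stdSimplex ℝ (Fin (m j))

/-- the game is normalized: all pure-strategy payoffs of every player lie in
`[0,1]` against every mixed profile. -/
def normalized : Prop :=
  ∀ i (x : ∀ j, Fin (m j) → ℝ), isProfile m x →
    ∀ k, usVec m N A i x k ∈ Set.Icc (0:ℝ) 1

section FinMaxOn

variable {α : Type*} {S : Finset α} {v : α → ℝ} {c : ℝ}

theorem finMaxOn_le (hS : S.Nonempty) (h : ∀ a ∈ S, v a ≤ c) : finMaxOn S v ≤ c := by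
  rw [finMaxOn, dif_pos hS]
  exact sup'_le hS v h

theorem finMaxOn_le_of_nonneg (hc : 0 ≤ c) (h : ∀ a ∈ S, v a ≤ c) : finMaxOn S v ≤ c := by
  by_cases hS : S.Nonempty
  · exact finMaxOn_le hS h
  · rwa [finMaxOn, dif_neg hS]

theorem exists_mem_finMaxOn_eq (hS : S.Nonempty) : ∃ a ∈ S, finMaxOn S v = v a := by
  rw [finMaxOn, dif_pos hS]
  exact exists_mem_eq_sup' hS v

end FinMaxOn

section Regret

variable {m N A}

theorem isProfile.univ_nonempty {x : ∀ j, Fin (m j) → ℝ} (hx : isProfile m x) (i : Fin n) :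
    (univ : Finset (Fin (m i))).Nonempty :=
  nonempty_of_sum_ne_zero (s := univ) (f := x i) (by rw [(hx i).2]; exact one_ne_zero)

theorem isProfile_pi_single (k : ∀ j, Fin (m j)) :
    isProfile m fun j => Pi.single (k j) 1 :=
  fun j => single_mem_stdSimplex ℝ (k j)

theorem payTo_pi_single (i : Fin n) (k : Fin (m i)) (x : ∀ j, Fin (m j) → ℝ) :
    payTo m N A i (Pi.single k 1) x = usVec m N A i x k := by
  simp [payTo, Pi.single_apply]

theorem exists_profile_payTo_eq_brp {x : ∀ j, Fin (m j) → ℝ} (hx : isProfile m x) :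
    ∃ x', isProfile m x' ∧ ∀ i, payTo m N A i (x' i) x = brp m N A i x := by
  choose k _ hk using fun i => exists_mem_finMaxOn_eq (v := usVec m N A i x) (hx.univ_nonempty i)
  exact ⟨_, isProfile_pi_single k, fun i => by rw [payTo_pi_single, brp, hk]⟩

theorem payTo_nonneg (hnorm : normalized m N A) {x x' : ∀ j, Fin (m j) → ℝ}
    (hx : isProfile m x) (hx' : isProfile m x') (i : Fin n) :
    0 ≤ payTo m N A i (x i) x' :=
  sum_nonneg fun q _ => mul_nonneg ((hx i).1 q) (hnorm i x' hx' q).1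

theorem Dfd_le_one_sub_regret (hnorm : normalized m N A) (δ : ℝ) (i : Fin n)
    {x x' : ∀ j, Fin (m j) → ℝ} (hx : isProfile m x) (hx' : isProfile m x')
    (hbr : payTo m N A i (x' i) x = brp m N A i x) :
    Dfd m N A δ i x x' ≤ 1 - regret m N A i x := by
  have hmax : finMaxOn (brdSet m N A δ i x) (usVec m N A i x') ≤ 1 :=
    finMaxOn_le_of_nonneg zero_le_one fun k _ => (hnorm i x' hx' k).2
  have hpay := payTo_nonneg hnorm hx hx' i
  rw [Dfd, regret, payoff, hbr]
  linarith

theorem Kset_nonempty (hn : 0 < n) (x : ∀ j, Fin (m j) → ℝ) : (Kset m N A x).Nonempty := by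
  obtain ⟨i, -, hi⟩ := exists_mem_finMaxOn_eq (v := fun i => regret m N A i x)
    (univ_nonempty_iff.mpr ⟨⟨0, hn⟩⟩)
  exact ⟨i, mem_filter.mpr ⟨mem_univ i, hi.symm⟩⟩

theorem DfdAll_le_one_sub_two_mul_maxRegret (hn : 0 < n) (hnorm : normalized m N A) (δ : ℝ)
    {x x' : ∀ j, Fin (m j) → ℝ} (hx : isProfile m x) (hx' : isProfile m x')
    (hbr : ∀ i, payTo m N A i (x' i) x = brp m N A i x) :
    DfdAll m N A δ x x' ≤ 1 - 2 * maxRegret m N A x := by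
  have hmax : finMaxOn (Kset m N A x) (fun i => Dfd m N A δ i x x') ≤ 1 - maxRegret m N A x :=
    finMaxOn_le (Kset_nonempty hn x) fun i hi => by
      rw [← (mem_filter.mp hi).2]
      exact Dfd_le_one_sub_regret hnorm δ i hx hx' (hbr i)
  rw [DfdAll]
  linarith

end Regret

theorem stmt2 (hn : 0 < n) (hnorm : normalized m N A)
    (δ : ℝ) (hδ : 0 < δ)
    (xstar : ∀ j, Fin (m j) → ℝ) (hx : isProfile m xstar)
    (hstat : ∀ x', isProfile m x' → -δ ≤ DfdAll m N A δ xstar x') :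
    maxRegret m N A xstar ≤ 0.5 + δ := by
  obtain ⟨x', hx', hbr⟩ := exists_profile_payTo_eq_brp (N := N) (A := A) hx
  have := DfdAll_le_one_sub_two_mul_maxRegret hn hnorm δ hx hx' hbr
  linarith [hstat x' hx']

end Polymatrix
end
end

section
/- Let x, x' be profiles in a polymatrix game, i a player, and S = Br_i(x) the set of pure best responses of player i to x. Then for all ε ∈ [0,1], the best-response payoff satisfies: max_k (u_i^s((1−ε)x + εx'))_k = (1−ε)·max_{l∈S}(u_i^s(x))_l + ε·max_{l∈S}(u_i^s(x'))_l + Λ_i(x, x', ε), where Λ_i(x, x', ε) = max{0, max_{k∉S}(u_i^s(x̄))_k − max_{l∈S}(u_i^s(x̄))_l} with x̄ = (1−ε)x + εx'. -/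
/-! On `S = Br_i(x)` the payoff vector `u_i^s(x)` is constant, so by linearity `u_i^s(x̄)`
restricted to `S` is a constant plus `ε u_i^s(x')`, and its maximum over `S` is
`(1−ε)·max_S u_i^s(x) + ε·max_S u_i^s(x')`. The maximum over all pure strategies exceeds the
maximum over `S` by exactly the positive part of the excess of the maximum over the complement. -/

open Finset
open scoped Classical

noncomputable section

section Polymatrix

variable {n : ℕ} (m : Fin n → ℕ) (N : Fin n → Finset (Fin n))
  (A : ∀ i j : Fin n, Matrix (Fin (m i)) (Fin (m j)) ℝ)

theorem finMaxOn_congr {α : Type*} {S : Finset α} {v w : α → ℝ} (h : ∀ k ∈ S, v k = w k) :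
    finMaxOn S v = finMaxOn S w := by
  unfold finMaxOn
  split_ifs with hS
  exacts [Finset.sup'_congr hS rfl h, rfl]

theorem finMaxOn_const_add_mul {α : Type*} {S : Finset α} (hS : S.Nonempty) (c : ℝ) {ε : ℝ}
    (hε : 0 ≤ ε) (v : α → ℝ) :
    finMaxOn S (fun k => c + ε * v k) = c + ε * finMaxOn S v := by
  have hmono : Monotone fun t : ℝ => c + ε * t := fun _ _ h =>
    (add_le_add_iff_left c).mpr (mul_le_mul_of_nonneg_left h hε)
  simp only [finMaxOn, dif_pos hS]
  exact (apply_sup'_eq_sup'_comp hS (fun t => c + ε * t) fun _ _ => hmono.map_max).symm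

theorem finMaxOn_univ_eq_add {α : Type*} [Fintype α] [DecidableEq α] {S : Finset α}
    (hS : S.Nonempty) (v : α → ℝ) :
    finMaxOn univ v = finMaxOn S v
      + if _h : Sᶜ.Nonempty then max 0 (finMaxOn Sᶜ v - finMaxOn S v) else 0 := by
  split_ifs with hSc
  · have hsplit : finMaxOn univ v = max (finMaxOn S v) (finMaxOn Sᶜ v) := by
      simp only [finMaxOn, dif_pos hS, dif_pos hSc, dif_pos (hS.mono (subset_univ S))]
      rw [← Finset.sup'_union hS hSc]
      exact Finset.sup'_congr _ (union_compl S).symm fun _ _ => rfl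
    rw [hsplit, ← max_add_add_left, add_zero, add_sub_cancel]
  · rw [not_nonempty_iff_eq_empty, compl_eq_empty_iff] at hSc
    rw [hSc, add_zero]

theorem usVec_mix (i : Fin n) (x x' : ∀ j, Fin (m j) → ℝ) (ε : ℝ) (k : Fin (m i)) :
    usVec m N A i (mix m x x' ε) k
      = (1 - ε) * usVec m N A i x k + ε * usVec m N A i x' k := by
  simp only [usVec, mix, Pi.add_apply, Pi.smul_apply, smul_eq_mul, mul_sum,
    ← sum_add_distrib]
  exact sum_congr rfl fun _ _ => sum_congr rfl fun _ _ => by ring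

theorem brSet_nonempty (i : Fin n) [Nonempty (Fin (m i))] (x : ∀ j, Fin (m j) → ℝ) :
    (brSet m N A i x).Nonempty := by
  obtain ⟨k, -, hk⟩ := exists_max_image univ (usVec m N A i x) univ_nonempty
  exact ⟨k, mem_filter.mpr ⟨mem_univ k, fun l => hk l (mem_univ l)⟩⟩

theorem usVec_eq_finMaxOn_brSet {i : Fin n} {x : ∀ j, Fin (m j) → ℝ} {l : Fin (m i)}
    (hl : l ∈ brSet m N A i x) :
    usVec m N A i x l = finMaxOn (brSet m N A i x) (usVec m N A i x) := by
  rw [finMaxOn, dif_pos ⟨l, hl⟩]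
  exact le_antisymm (le_sup' _ hl) (sup'_le _ _ fun k _ => (mem_filter.mp hl).2 k)

theorem finMaxOn_brSet_usVec_mix (i : Fin n) (x x' : ∀ j, Fin (m j) → ℝ) {ε : ℝ}
    (hε : 0 ≤ ε) (hS : (brSet m N A i x).Nonempty) :
    finMaxOn (brSet m N A i x) (usVec m N A i (mix m x x' ε))
      = (1 - ε) * finMaxOn (brSet m N A i x) (usVec m N A i x)
        + ε * finMaxOn (brSet m N A i x) (usVec m N A i x') := by
  rw [← finMaxOn_const_add_mul hS _ hε]
  refine finMaxOn_congr fun k hk => ?_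
  rw [usVec_mix, usVec_eq_finMaxOn_brSet m N A hk]

theorem stmt4 (i : Fin n) (x x' : ∀ j, Fin (m j) → ℝ)
    (ε : ℝ) (hε : ε ∈ Set.Icc (0:ℝ) 1) :
    brp m N A i (mix m x x' ε)
      = (1 - ε) * finMaxOn (brSet m N A i x) (usVec m N A i x)
        + ε * finMaxOn (brSet m N A i x) (usVec m N A i x')
        + LamBr m N A i x x' ε := by
  cases isEmpty_or_nonempty (Fin (m i))
  · simp [brp, LamBr, finMaxOn, eq_empty_of_isEmpty (brSet m N A i x)]
  have hS := brSet_nonempty m N A i x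
  rw [← finMaxOn_brSet_usVec_mix m N A i x x' hε.1 hS, brp, finMaxOn_univ_eq_add hS, LamBr]

end Polymatrix
end
end
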